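/- arXiv:2511.20915 — 2 statements merged into one kernel-verified Lean document; each statement's English description precedes it below -/
import Mathlib

section
/- Let k, l ≥ 1 with k ≠ l, m = 2k, n = 2l, and 1 ≤ r ≤ 4kl. Call a board B with r blockers reduced if its board partition (λ1,λ2,λ3,λ4) satisfies: (i) λ1 ≥ λ2, λ1 ≥ λ3, λ1 ≥ λ4; (ii) if λ1 = λ2 then λ3 ≥ λ4; (iii) if λ1 = λ3 then λ2 ≥ λ4; (iv) if λ1 = λ4 then λ2 ≥ λ3. Then: (a) every board with r blockers on the m×n grid is equivalent under {R0, H, V, R180} to some reduced board; and (b) if two reduced boards are equivalent under {R0, H, V, R180} then they have the same board partition. -/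
/-- The symmetry group `{R0, H, V, R180}` of a non-square `m × n` rectangle,
as permutations of `Fin m × Fin n` (`Fin.rev i = m-1-i` resp. `n-1-j`). -/
def RectG (m n : ℕ) : Set ((Fin m × Fin n) → (Fin m × Fin n)) :=
  { fun p => p,                    -- R0
    fun p => (p.1.rev, p.2),       -- H
    fun p => (p.1, p.2.rev),       -- V
    fun p => (p.1.rev, p.2.rev) }  -- R180

/-- Blockers in the top-left quadrant `Q1`. -/
def lam1 (k l : ℕ) (B : Finset (Fin (2*k) × Fin (2*l))) : ℕ :=
  (B.filter (fun p => p.1.val < k ∧ p.2.val < l)).card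

/-- Blockers in the top-right quadrant `Q2`. -/
def lam2 (k l : ℕ) (B : Finset (Fin (2*k) × Fin (2*l))) : ℕ :=
  (B.filter (fun p => p.1.val < k ∧ l ≤ p.2.val)).card

/-- Blockers in the bottom-right quadrant `Q3`. -/
def lam3 (k l : ℕ) (B : Finset (Fin (2*k) × Fin (2*l))) : ℕ :=
  (B.filter (fun p => k ≤ p.1.val ∧ l ≤ p.2.val)).card

/-- Blockers in the bottom-left quadrant `Q4`. -/
def lam4 (k l : ℕ) (B : Finset (Fin (2*k) × Fin (2*l))) : ℕ :=
  (B.filter (fun p => k ≤ p.1.val ∧ p.2.val < l)).card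

/-- Conditions (i)–(iv) on the board partition `(λ1,λ2,λ3,λ4)` of a
`2k × 2l` board. -/
def ReducedR (k l : ℕ) (B : Finset (Fin (2*k) × Fin (2*l))) : Prop :=
  lam1 k l B ≥ lam2 k l B ∧ lam1 k l B ≥ lam3 k l B ∧ lam1 k l B ≥ lam4 k l B ∧
  (lam1 k l B = lam2 k l B → lam3 k l B ≥ lam4 k l B) ∧
  (lam1 k l B = lam3 k l B → lam2 k l B ≥ lam4 k l B) ∧
  (lam1 k l B = lam4 k l B → lam2 k l B ≥ lam3 k l B)

/-- Abstract reducedness conditions on a tuple of naturals. -/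
def RedT (a b c d : ℕ) : Prop :=
  a ≥ b ∧ a ≥ c ∧ a ≥ d ∧ (a = b → c ≥ d) ∧ (a = c → b ≥ d) ∧ (a = d → b ≥ c)

lemma redTot (a b c d : ℕ) : RedT a b c d ∨ RedT d c b a ∨ RedT b a d c ∨ RedT c d a b := by
  unfold RedT; omega

lemma redH_eq {a b c d : ℕ} (h : RedT a b c d) (h' : RedT d c b a) : a = d ∧ b = c := by
  have had : a = d := le_antisymm h'.2.2.1 h.2.2.1
  exact ⟨had, le_antisymm (h'.2.2.2.2.2 had.symm) (h.2.2.2.2.2 had)⟩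

lemma redV_eq {a b c d : ℕ} (h : RedT a b c d) (h' : RedT b a d c) : a = b ∧ c = d := by
  have hab : a = b := le_antisymm h'.1 h.1
  exact ⟨hab, le_antisymm (h'.2.2.2.1 hab.symm) (h.2.2.2.1 hab)⟩

lemma redR_eq {a b c d : ℕ} (h : RedT a b c d) (h' : RedT c d a b) : a = c ∧ b = d := by
  have hac : a = c := le_antisymm h'.2.1 h.2.1
  exact ⟨hac, le_antisymm (h'.2.2.2.2.1 hac.symm) (h.2.2.2.2.1 hac)⟩

section
variable {m n : ℕ}

lemma injH : Function.Injective (fun p : Fin m × Fin n => (p.1.rev, p.2)) := by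
  intro p q h
  simp only [Prod.mk.injEq, Fin.rev_inj] at h
  exact Prod.ext h.1 h.2

lemma injV : Function.Injective (fun p : Fin m × Fin n => (p.1, p.2.rev)) := by
  intro p q h
  simp only [Prod.mk.injEq, Fin.rev_inj] at h
  exact Prod.ext h.1 h.2

lemma injR : Function.Injective (fun p : Fin m × Fin n => (p.1.rev, p.2.rev)) := by
  intro p q h
  simp only [Prod.mk.injEq, Fin.rev_inj] at h
  exact Prod.ext h.1 h.2

end

lemma rev_lt_iff {m k : ℕ} (hm : m = 2 * k) (i : Fin m) : i.rev.val < k ↔ k ≤ i.val := by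
  have := i.isLt
  rw [Fin.val_rev]
  omega

lemma le_rev_iff {m k : ℕ} (hm : m = 2 * k) (i : Fin m) : k ≤ i.rev.val ↔ i.val < k := by
  have := i.isLt
  rw [Fin.val_rev]
  omega

variable {k l : ℕ}

lemma lamsH (B : Finset (Fin (2*k) × Fin (2*l))) :
    lam1 k l (B.image (fun p => (p.1.rev, p.2))) = lam4 k l B ∧
    lam2 k l (B.image (fun p => (p.1.rev, p.2))) = lam3 k l B ∧
    lam3 k l (B.image (fun p => (p.1.rev, p.2))) = lam2 k l B ∧
    lam4 k l (B.image (fun p => (p.1.rev, p.2))) = lam1 k l B := by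
  unfold lam1 lam2 lam3 lam4
  refine ⟨?_, ?_, ?_, ?_⟩ <;>
  · rw [Finset.filter_image, Finset.card_image_of_injective _ injH]
    congr 1
    apply Finset.filter_congr
    intro p _
    have h1 := p.1.isLt
    have h2 := p.2.isLt
    simp only [Fin.val_rev]
    omega

lemma lamsV (B : Finset (Fin (2*k) × Fin (2*l))) :
    lam1 k l (B.image (fun p => (p.1, p.2.rev))) = lam2 k l B ∧
    lam2 k l (B.image (fun p => (p.1, p.2.rev))) = lam1 k l B ∧
    lam3 k l (B.image (fun p => (p.1, p.2.rev))) = lam4 k l B ∧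
    lam4 k l (B.image (fun p => (p.1, p.2.rev))) = lam3 k l B := by
  unfold lam1 lam2 lam3 lam4
  refine ⟨?_, ?_, ?_, ?_⟩ <;>
  · rw [Finset.filter_image, Finset.card_image_of_injective _ injV]
    congr 1
    apply Finset.filter_congr
    intro p _
    have h1 := p.1.isLt
    have h2 := p.2.isLt
    simp only [Fin.val_rev]
    omega

lemma lamsR (B : Finset (Fin (2*k) × Fin (2*l))) :
    lam1 k l (B.image (fun p => (p.1.rev, p.2.rev))) = lam3 k l B ∧
    lam2 k l (B.image (fun p => (p.1.rev, p.2.rev))) = lam4 k l B ∧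
    lam3 k l (B.image (fun p => (p.1.rev, p.2.rev))) = lam1 k l B ∧
    lam4 k l (B.image (fun p => (p.1.rev, p.2.rev))) = lam2 k l B := by
  unfold lam1 lam2 lam3 lam4
  refine ⟨?_, ?_, ?_, ?_⟩ <;>
  · rw [Finset.filter_image, Finset.card_image_of_injective _ injR]
    congr 1
    apply Finset.filter_congr
    intro p _
    have h1 := p.1.isLt
    have h2 := p.2.isLt
    simp only [Fin.val_rev]
    omega

lemma reducedR_iff (B : Finset (Fin (2*k) × Fin (2*l))) :
    ReducedR k l B ↔ RedT (lam1 k l B) (lam2 k l B) (lam3 k l B) (lam4 k l B) :=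
  Iff.rfl

/-- (a) every board with `r` blockers on the (non-square)
`2k × 2l` grid is equivalent under `{R0, H, V, R180}` to a reduced board;
(b) two equivalent reduced boards have the same board partition. -/
theorem stmt_5 (k l r : ℕ) (hk : 1 ≤ k) (hl : 1 ≤ l) (hkl : k ≠ l)
    (hr1 : 1 ≤ r) (hr2 : r ≤ 4 * k * l) :
    (∀ B : Finset (Fin (2*k) × Fin (2*l)), B.card = r →
      ∃ B' : Finset (Fin (2*k) × Fin (2*l)), B'.card = r ∧ ReducedR k l B' ∧
        ∃ g ∈ RectG (2*k) (2*l), B.image g = B') ∧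
    (∀ B B' : Finset (Fin (2*k) × Fin (2*l)), B.card = r → B'.card = r →
      ReducedR k l B → ReducedR k l B' →
      (∃ g ∈ RectG (2*k) (2*l), B.image g = B') →
      lam1 k l B = lam1 k l B' ∧ lam2 k l B = lam2 k l B' ∧
      lam3 k l B = lam3 k l B' ∧ lam4 k l B = lam4 k l B') := by
  constructor
  · intro B hB
    rcases redTot (lam1 k l B) (lam2 k l B) (lam3 k l B) (lam4 k l B) with h | h | h | h
    · exact ⟨B, hB, (reducedR_iff B).mpr h, fun p => p, by simp [RectG], by simp⟩
    · refine ⟨B.image (fun p => (p.1.rev, p.2)),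
        by rw [Finset.card_image_of_injective _ injH]; exact hB, ?_,
        fun p => (p.1.rev, p.2), by simp [RectG], rfl⟩
      rw [reducedR_iff]
      obtain ⟨e1, e2, e3, e4⟩ := lamsH B
      rw [e1, e2, e3, e4]
      exact h
    · refine ⟨B.image (fun p => (p.1, p.2.rev)),
        by rw [Finset.card_image_of_injective _ injV]; exact hB, ?_,
        fun p => (p.1, p.2.rev), by simp [RectG], rfl⟩
      rw [reducedR_iff]
      obtain ⟨e1, e2, e3, e4⟩ := lamsV B
      rw [e1, e2, e3, e4]
      exact h
    · refine ⟨B.image (fun p => (p.1.rev, p.2.rev)),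
        by rw [Finset.card_image_of_injective _ injR]; exact hB, ?_,
        fun p => (p.1.rev, p.2.rev), by simp [RectG], rfl⟩
      rw [reducedR_iff]
      obtain ⟨e1, e2, e3, e4⟩ := lamsR B
      rw [e1, e2, e3, e4]
      exact h
  · rintro B B' hBc hBc' hRed hRed' ⟨g, hg, rfl⟩
    rw [reducedR_iff] at hRed hRed'
    simp only [RectG, Set.mem_insert_iff, Set.mem_singleton_iff] at hg
    rcases hg with rfl | rfl | rfl | rfl
    · simp
    · obtain ⟨e1, e2, e3, e4⟩ := lamsH B
      rw [e1, e2, e3, e4] at hRed' ⊢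
      obtain ⟨h1, h2⟩ := redH_eq hRed hRed'
      exact ⟨h1, h2, h2.symm, h1.symm⟩
    · obtain ⟨e1, e2, e3, e4⟩ := lamsV B
      rw [e1, e2, e3, e4] at hRed' ⊢
      obtain ⟨h1, h2⟩ := redV_eq hRed hRed'
      exact ⟨h1, h1.symm, h2, h2.symm⟩
    · obtain ⟨e1, e2, e3, e4⟩ := lamsR B
      rw [e1, e2, e3, e4] at hRed' ⊢
      obtain ⟨h1, h2⟩ := redR_eq hRed hRed'
      exact ⟨h1, h2, h1.symm, h2.symm⟩
end

section
/- Let k, l ≥ 1 with k ≠ l, m = 2k, n = 2l, and let r be an odd integer with 1 ≤ r ≤ 4kl. Then every board B with r blockers on the m×n grid is equivalent under {R0, H, V, R180} to exactly one board B′ whose board partition (λ1,λ2,λ3,λ4) satisfies: (i) λ1 ≥ λ2, λ1 ≥ λ3, λ1 ≥ λ4; (ii) if λ1 = λ2 then λ3 ≥ λ4; (iii) if λ1 = λ3 then λ2 ≥ λ4; (iv) if λ1 = λ4 then λ2 ≥ λ3. Equivalently, when r is odd the reduced set contains exactly one board from each equivalence class. -/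
section Aux

variable {k l : ℕ}

private lemma invol_H : Function.Involutive
    (fun p : Fin (2*k) × Fin (2*l) => (p.1.rev, p.2)) := fun p => by
  simp [Fin.rev_rev]

private lemma invol_V : Function.Involutive
    (fun p : Fin (2*k) × Fin (2*l) => (p.1, p.2.rev)) := fun p => by
  simp [Fin.rev_rev]

private lemma invol_R : Function.Involutive
    (fun p : Fin (2*k) × Fin (2*l) => (p.1.rev, p.2.rev)) := fun p => by
  simp [Fin.rev_rev]

private lemma mem_rectG_iff {g : (Fin (2*k) × Fin (2*l)) → (Fin (2*k) × Fin (2*l))} :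
    g ∈ RectG (2*k) (2*l) ↔
      g = (fun p => p) ∨ g = (fun p => (p.1.rev, p.2)) ∨
      g = (fun p => (p.1, p.2.rev)) ∨ g = (fun p => (p.1.rev, p.2.rev)) := by
  simp [RectG, Set.mem_insert_iff, Set.mem_singleton_iff]

private lemma invol_of_mem {g : (Fin (2*k) × Fin (2*l)) → (Fin (2*k) × Fin (2*l))}
    (hg : g ∈ RectG (2*k) (2*l)) : Function.Involutive g := by
  rcases mem_rectG_iff.1 hg with rfl | rfl | rfl | rfl
  · exact fun p => rfl
  · exact invol_H
  · exact invol_V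
  · exact invol_R

private lemma comp_mem {g1 g2 : (Fin (2*k) × Fin (2*l)) → (Fin (2*k) × Fin (2*l))}
    (h1 : g1 ∈ RectG (2*k) (2*l)) (h2 : g2 ∈ RectG (2*k) (2*l)) :
    g1 ∘ g2 ∈ RectG (2*k) (2*l) := by
  rw [mem_rectG_iff] at *
  rcases h1 with rfl | rfl | rfl | rfl <;> rcases h2 with rfl | rfl | rfl | rfl <;>
    first
      | (refine Or.inl ?_; funext p; simp [Function.comp, Fin.rev_rev]; done)
      | (refine Or.inr (Or.inl ?_); funext p; simp [Function.comp, Fin.rev_rev]; done)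
      | (refine Or.inr (Or.inr (Or.inl ?_)); funext p; simp [Function.comp, Fin.rev_rev]; done)
      | (refine Or.inr (Or.inr (Or.inr ?_)); funext p; simp [Function.comp, Fin.rev_rev]; done)

private lemma lam_sum (B : Finset (Fin (2*k) × Fin (2*l))) :
    lam1 k l B + lam2 k l B + lam3 k l B + lam4 k l B = B.card := by
  unfold lam1 lam2 lam3 lam4
  rw [Finset.card_filter, Finset.card_filter, Finset.card_filter, Finset.card_filter,
    Finset.card_eq_sum_ones, ← Finset.sum_add_distrib, ← Finset.sum_add_distrib,
    ← Finset.sum_add_distrib]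
  refine Finset.sum_congr rfl fun p _ => ?_
  split_ifs <;> omega

section LamImage

variable (hk : 1 ≤ k) (hl : 1 ≤ l) (B : Finset (Fin (2*k) × Fin (2*l)))

private lemma lamH1 : lam1 k l (B.image (fun p => (p.1.rev, p.2))) = lam4 k l B := by
  unfold lam1 lam4
  rw [Finset.filter_image, Finset.card_image_of_injective _ invol_H.injective]
  congr 1
  refine Finset.filter_congr fun p _ => ?_
  have h1 := p.1.isLt
  simp only [Fin.val_rev]; omega

private lemma lamH2 : lam2 k l (B.image (fun p => (p.1.rev, p.2))) = lam3 k l B := by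
  unfold lam2 lam3
  rw [Finset.filter_image, Finset.card_image_of_injective _ invol_H.injective]
  congr 1
  refine Finset.filter_congr fun p _ => ?_
  have h1 := p.1.isLt
  simp only [Fin.val_rev]; omega

private lemma lamH3 : lam3 k l (B.image (fun p => (p.1.rev, p.2))) = lam2 k l B := by
  unfold lam3 lam2
  rw [Finset.filter_image, Finset.card_image_of_injective _ invol_H.injective]
  congr 1
  refine Finset.filter_congr fun p _ => ?_
  have h1 := p.1.isLt
  simp only [Fin.val_rev]; omega

private lemma lamH4 : lam4 k l (B.image (fun p => (p.1.rev, p.2))) = lam1 k l B := by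
  unfold lam4 lam1
  rw [Finset.filter_image, Finset.card_image_of_injective _ invol_H.injective]
  congr 1
  refine Finset.filter_congr fun p _ => ?_
  have h1 := p.1.isLt
  simp only [Fin.val_rev]; omega

private lemma lamV1 : lam1 k l (B.image (fun p => (p.1, p.2.rev))) = lam2 k l B := by
  unfold lam1 lam2
  rw [Finset.filter_image, Finset.card_image_of_injective _ invol_V.injective]
  congr 1
  refine Finset.filter_congr fun p _ => ?_
  have h2 := p.2.isLt
  simp only [Fin.val_rev]; omega

private lemma lamV2 : lam2 k l (B.image (fun p => (p.1, p.2.rev))) = lam1 k l B := by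
  unfold lam2 lam1
  rw [Finset.filter_image, Finset.card_image_of_injective _ invol_V.injective]
  congr 1
  refine Finset.filter_congr fun p _ => ?_
  have h2 := p.2.isLt
  simp only [Fin.val_rev]; omega

private lemma lamV3 : lam3 k l (B.image (fun p => (p.1, p.2.rev))) = lam4 k l B := by
  unfold lam3 lam4
  rw [Finset.filter_image, Finset.card_image_of_injective _ invol_V.injective]
  congr 1
  refine Finset.filter_congr fun p _ => ?_
  have h2 := p.2.isLt
  simp only [Fin.val_rev]; omega

private lemma lamV4 : lam4 k l (B.image (fun p => (p.1, p.2.rev))) = lam3 k l B := by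
  unfold lam4 lam3
  rw [Finset.filter_image, Finset.card_image_of_injective _ invol_V.injective]
  congr 1
  refine Finset.filter_congr fun p _ => ?_
  have h2 := p.2.isLt
  simp only [Fin.val_rev]; omega

private lemma lamR1 : lam1 k l (B.image (fun p => (p.1.rev, p.2.rev))) = lam3 k l B := by
  unfold lam1 lam3
  rw [Finset.filter_image, Finset.card_image_of_injective _ invol_R.injective]
  congr 1
  refine Finset.filter_congr fun p _ => ?_
  have h1 := p.1.isLt; have h2 := p.2.isLt
  simp only [Fin.val_rev]; omega

private lemma lamR2 : lam2 k l (B.image (fun p => (p.1.rev, p.2.rev))) = lam4 k l B := by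
  unfold lam2 lam4
  rw [Finset.filter_image, Finset.card_image_of_injective _ invol_R.injective]
  congr 1
  refine Finset.filter_congr fun p _ => ?_
  have h1 := p.1.isLt; have h2 := p.2.isLt
  simp only [Fin.val_rev]; omega

private lemma lamR3 : lam3 k l (B.image (fun p => (p.1.rev, p.2.rev))) = lam1 k l B := by
  unfold lam3 lam1
  rw [Finset.filter_image, Finset.card_image_of_injective _ invol_R.injective]
  congr 1
  refine Finset.filter_congr fun p _ => ?_
  have h1 := p.1.isLt; have h2 := p.2.isLt
  simp only [Fin.val_rev]; omega

private lemma lamR4 : lam4 k l (B.image (fun p => (p.1.rev, p.2.rev))) = lam2 k l B := by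
  unfold lam4 lam2
  rw [Finset.filter_image, Finset.card_image_of_injective _ invol_R.injective]
  congr 1
  refine Finset.filter_congr fun p _ => ?_
  have h1 := p.1.isLt; have h2 := p.2.isLt
  simp only [Fin.val_rev]; omega

end LamImage

private lemma exists_reduced (hk : 1 ≤ k) (hl : 1 ≤ l) (B : Finset (Fin (2*k) × Fin (2*l))) :
    ∃ g ∈ RectG (2*k) (2*l), ReducedR k l (B.image g) := by
  set a := lam1 k l B with ha
  set b := lam2 k l B with hb
  set c := lam3 k l B with hc
  set d := lam4 k l B with hd
  have key : (a ≥ b ∧ a ≥ c ∧ a ≥ d ∧ (a = b → c ≥ d) ∧ (a = c → b ≥ d) ∧ (a = d → b ≥ c)) ∨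
      (d ≥ c ∧ d ≥ b ∧ d ≥ a ∧ (d = c → b ≥ a) ∧ (d = b → c ≥ a) ∧ (d = a → c ≥ b)) ∨
      (b ≥ a ∧ b ≥ d ∧ b ≥ c ∧ (b = a → d ≥ c) ∧ (b = d → a ≥ c) ∧ (b = c → a ≥ d)) ∨
      (c ≥ d ∧ c ≥ a ∧ c ≥ b ∧ (c = d → a ≥ b) ∧ (c = a → d ≥ b) ∧ (c = b → d ≥ a)) := by
    omega
  rcases key with h | h | h | h
  · exact ⟨fun p => p, Or.inl rfl, by
      unfold ReducedR
      rw [Finset.image_id']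
      exact h⟩
  · refine ⟨fun p => (p.1.rev, p.2), Or.inr (Or.inl rfl), ?_⟩
    unfold ReducedR
    rw [lamH1 B, lamH2 B, lamH3 B, lamH4 B]
    exact h
  · refine ⟨fun p => (p.1, p.2.rev), Or.inr (Or.inr (Or.inl rfl)), ?_⟩
    unfold ReducedR
    rw [lamV1 B, lamV2 B, lamV3 B, lamV4 B]
    exact h
  · refine ⟨fun p => (p.1.rev, p.2.rev), Or.inr (Or.inr (Or.inr rfl)), ?_⟩
    unfold ReducedR
    rw [lamR1 B, lamR2 B, lamR3 B, lamR4 B]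
    exact h

private lemma reduced_unique (hk : 1 ≤ k) (hl : 1 ≤ l)
    (B1 B2 : Finset (Fin (2*k) × Fin (2*l))) (hodd : Odd B1.card)
    (h1 : ReducedR k l B1) (h2 : ReducedR k l B2)
    {g : (Fin (2*k) × Fin (2*l)) → (Fin (2*k) × Fin (2*l))}
    (hg : g ∈ RectG (2*k) (2*l)) (hImg : B1.image g = B2) : B1 = B2 := by
  obtain ⟨t, ht⟩ := hodd
  have hs1 := lam_sum B1
  have hs2 := lam_sum B2
  unfold ReducedR at h1 h2
  rcases mem_rectG_iff.1 hg with rfl | rfl | rfl | rfl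
  · rw [← hImg, Finset.image_id']
  · exfalso
    have e1 : lam1 k l B2 = lam4 k l B1 := by rw [← hImg, lamH1]
    have e2 : lam2 k l B2 = lam3 k l B1 := by rw [← hImg, lamH2]
    have e3 : lam3 k l B2 = lam2 k l B1 := by rw [← hImg, lamH3]
    have e4 : lam4 k l B2 = lam1 k l B1 := by rw [← hImg, lamH4]
    omega
  · exfalso
    have e1 : lam1 k l B2 = lam2 k l B1 := by rw [← hImg, lamV1]
    have e2 : lam2 k l B2 = lam1 k l B1 := by rw [← hImg, lamV2]
    have e3 : lam3 k l B2 = lam4 k l B1 := by rw [← hImg, lamV3]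
    have e4 : lam4 k l B2 = lam3 k l B1 := by rw [← hImg, lamV4]
    omega
  · exfalso
    have e1 : lam1 k l B2 = lam3 k l B1 := by rw [← hImg, lamR1]
    have e2 : lam2 k l B2 = lam4 k l B1 := by rw [← hImg, lamR2]
    have e3 : lam3 k l B2 = lam1 k l B1 := by rw [← hImg, lamR3]
    have e4 : lam4 k l B2 = lam2 k l B1 := by rw [← hImg, lamR4]
    omega

end Aux

/-- for odd `r`, every board with `r` blockers on the non-square
`2k × 2l` grid is equivalent under `{R0, H, V, R180}` to *exactly one* reduced
board: the reduced set contains exactly one board from each equivalence class. -/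
theorem stmt_17 (k l r : ℕ) (hk : 1 ≤ k) (hl : 1 ≤ l) (hkl : k ≠ l)
    (hodd : Odd r) (hr1 : 1 ≤ r) (hr2 : r ≤ 4 * k * l) :
    ∀ B : Finset (Fin (2*k) × Fin (2*l)), B.card = r →
      ∃! B' : Finset (Fin (2*k) × Fin (2*l)),
        B'.card = r ∧ ReducedR k l B' ∧ ∃ g ∈ RectG (2*k) (2*l), B.image g = B' := by
  intro B hB
  obtain ⟨g, hg, hred⟩ := exists_reduced hk hl B
  have hinv := invol_of_mem hg
  have hcard : (B.image g).card = r := by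
    rw [Finset.card_image_of_injective _ hinv.injective, hB]
  refine ⟨B.image g, ⟨hcard, hred, g, hg, rfl⟩, ?_⟩
  rintro B2 ⟨hc2, hr2, g2, hg2, hB2⟩
  have hBB : (B.image g).image g = B := by
    rw [Finset.image_image, hinv.comp_self, Finset.image_id]
  have hImg : (B.image g).image (g2 ∘ g) = B2 := by
    rw [← Finset.image_image, hBB, hB2]
  exact (reduced_unique hk hl (B.image g) B2 (hcard ▸ hodd) hred hr2
    (comp_mem hg2 hg) hImg).symm
end
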